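/- arXiv:1508.06071 — 2 statements merged into one kernel-verified Lean document; each statement's English description precedes it below -/
import Mathlib

section
/- In ℝ² the convolution C of the indicator function of the disc of radius R centered at the origin with the centered Gaussian density of covariance σI (σ > 0) is radially symmetric and satisfies C(g) = e^{−‖g‖²/(2σ)} ∑_{m=0}^∞ (‖g‖²/(2σ))^m (1/m!) P(m + 1, R²/(2σ)), where P is the normalized lower incomplete gamma function. -/
open MeasureTheory Real

/-- The normalized (regularized) lower incomplete gamma function
`P(a, x) = γ(a, x) / Γ(a)`. -/
noncomputable def regIncGamma (a x : ℝ) : ℝ :=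
  (∫ t in (0 : ℝ)..x, Real.exp (-t) * t ^ (a - 1)) / Real.Gamma a

/-- The centered planar Gaussian density with covariance `σ I`. -/
noncomputable def gauss2 (σ : ℝ) (r : EuclideanSpace ℝ (Fin 2)) : ℝ :=
  (2 * π * σ)⁻¹ * Real.exp (-‖r‖ ^ 2 / (2 * σ))

/-- The indicator of the disc of radius `R` centered at the origin of `ℝ²`. -/
noncomputable def disc2 (R : ℝ) (r : EuclideanSpace ℝ (Fin 2)) : ℝ :=
  if ‖r‖ ≤ R then 1 else 0

/-!
Rotating about the origin moves `g` to `(0, ‖g‖)` without changing the disc or the Gaussian,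
so `C` is radial. For `g = (0, a)`, in polar coordinates `r = (s cos θ, s sin θ)` the Gaussian
factors as `e^{-(s² + a²)/2σ} e^{(a s / σ) sin θ}`. Expanding the second factor in its Taylor
series and integrating over `θ`, the odd moments of `sin` vanish and the even ones are Wallis
integrals, so the angular integral is `2π I₀(a s / σ) = 2π ∑ (a s / 2σ)^{2m} / (m!)²`.
Integrating this series termwise in `s` over `[0, R]`, the substitution `t = s²/2σ` turns the
`m`-th term into `γ(m + 1, R²/2σ)`.
-/

open Set

theorem intervalIntegral.hasSum_integral_of_summable_bound {ι E : Type*} [Countable ι]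
    [NormedAddCommGroup E] [NormedSpace ℝ E] {f : ι → ℝ → E} {F : ℝ → E} {a b : ℝ}
    (hf : ∀ i, Continuous (f i)) {M : ι → ℝ} (hM : Summable M)
    (hle : ∀ i, ∀ t ∈ uIcc a b, ‖f i t‖ ≤ M i)
    (hF : ∀ t ∈ uIcc a b, HasSum (fun i => f i t) (F t)) :
    HasSum (fun i => ∫ t in a..b, f i t) (∫ t in a..b, F t) := by
  refine intervalIntegral.hasSum_integral_of_dominated_convergence (fun i _ => M i)
    (fun i => (hf i).aestronglyMeasurable) (fun i => ?_) (.of_forall fun _ _ => hM)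
    intervalIntegrable_const (.of_forall fun t ht => hF t (uIoc_subset_uIcc ht))
  exact .of_forall fun t ht => hle i t (uIoc_subset_uIcc ht)

theorem Real.hasSum_pow_div_factorial (x : ℝ) :
    HasSum (fun n : ℕ => x ^ n / n.factorial) (exp x) := by
  rw [exp_eq_exp_ℝ]; exact NormedSpace.expSeries_div_hasSum_exp x

theorem integral_sin_pow_zero_two_pi (n : ℕ) :
    ∫ x in (0 : ℝ)..2 * π, sin x ^ n = (1 + (-1) ^ n) * ∫ x in (0 : ℝ)..π, sin x ^ n := by
  have hint : ∀ a b : ℝ, IntervalIntegrable (fun x => sin x ^ n) volume a b :=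
    fun _ _ => (continuous_sin.pow n).intervalIntegrable _ _
  have hshift : ∫ x in π..2 * π, sin x ^ n = (-1) ^ n * ∫ x in (0 : ℝ)..π, sin x ^ n := by
    have h := intervalIntegral.integral_comp_add_right (fun x => sin x ^ n) π (a := 0) (b := π)
    rw [zero_add, ← two_mul] at h
    rw [← h, ← intervalIntegral.integral_const_mul]
    refine intervalIntegral.integral_congr fun x _ => ?_
    rw [sin_add_pi, neg_pow]
  rw [← intervalIntegral.integral_add_adjacent_intervals (hint 0 π) (hint π (2 * π)), hshift]
  ring

theorem prod_range_odd_div_even_eq_centralBinom (m : ℕ) :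
    ∏ i ∈ Finset.range m, (2 * (i : ℝ) + 1) / (2 * i + 2) = m.centralBinom / 4 ^ m := by
  induction m with
  | zero => simp
  | succ k ih =>
    have h := Nat.succ_mul_centralBinom_succ k
    have hk : ((k + 1).centralBinom : ℝ) = 2 * (2 * k + 1) * k.centralBinom / (k + 1) := by
      rw [eq_div_iff (by positivity)]; exact_mod_cast (by linarith : _ = _)
    rw [Finset.prod_range_succ, ih, hk]
    field_simp
    ring

theorem integral_sin_pow_two_mul (m : ℕ) :
    ∫ x in (0 : ℝ)..π, sin x ^ (2 * m) = π * m.centralBinom / 4 ^ m := by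
  rw [integral_sin_pow_even, prod_range_odd_div_even_eq_centralBinom, mul_div_assoc]

theorem Nat.centralBinom_mul_factorial_sq (m : ℕ) :
    m.centralBinom * m.factorial ^ 2 = (2 * m).factorial := by
  have h := Nat.choose_mul_factorial_mul_factorial (show m ≤ 2 * m by omega)
  rw [show 2 * m - m = m by omega, ← Nat.centralBinom_eq_two_mul_choose] at h
  rw [← h, sq, mul_assoc]

theorem hasSum_integral_exp_mul_sin (c : ℝ) :
    HasSum (fun m : ℕ => 2 * π * (c ^ 2 / 4) ^ m / (m.factorial : ℝ) ^ 2)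
      (∫ θ in (0 : ℝ)..2 * π, exp (c * sin θ)) := by
  set f : ℕ → ℝ := fun n => c ^ n / n.factorial * ∫ θ in (0 : ℝ)..2 * π, sin θ ^ n
  have hf : HasSum f (∫ θ in (0 : ℝ)..2 * π, exp (c * sin θ)) := by
    have hbound (n : ℕ) (θ : ℝ) : ‖(c * sin θ) ^ n / n.factorial‖ ≤ |c| ^ n / n.factorial := by
      rw [norm_div, norm_pow, Real.norm_natCast, norm_mul, Real.norm_eq_abs, Real.norm_eq_abs]
      gcongr
      exact mul_le_of_le_one_right (abs_nonneg c) (abs_sin_le_one θ)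
    have hterm : f = fun n => ∫ θ in (0 : ℝ)..2 * π, (c * sin θ) ^ n / n.factorial := by
      ext n
      simp only [f]
      rw [← intervalIntegral.integral_const_mul]
      congr 1 with θ
      ring
    rw [hterm]
    exact intervalIntegral.hasSum_integral_of_summable_bound (fun n => by fun_prop)
      (summable_pow_div_factorial |c|) (fun n θ _ => hbound n θ)
      (fun θ _ => hasSum_pow_div_factorial (c * sin θ))
  have hodd : ∀ n ∉ range (2 * ·), f n = 0 := by
    intro n hn
    obtain ⟨m, rfl⟩ : Odd n := by
      rw [← Nat.not_even_iff_odd]; rintro ⟨m, rfl⟩; exact hn ⟨m, two_mul m⟩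
    simp [f, integral_sin_pow_zero_two_pi, pow_succ, pow_mul]
  have heven :
      f ∘ (2 * ·) = fun m : ℕ => 2 * π * (c ^ 2 / 4) ^ m / (m.factorial : ℝ) ^ 2 := by
    ext m
    simp only [Function.comp, f, integral_sin_pow_zero_two_pi, integral_sin_pow_two_mul]
    rw [← Nat.centralBinom_mul_factorial_sq, pow_mul, pow_mul, neg_one_sq, one_pow, div_pow]
    have hb : (m.centralBinom : ℝ) ≠ 0 := Nat.cast_ne_zero.mpr m.centralBinom_ne_zero
    push_cast
    field_simp
    ring
  rw [← heven]
  exact (Function.Injective.hasSum_iff (mul_right_injective₀ two_ne_zero) hodd).mpr hf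

theorem integral_exp_mul_sin_neg_pi_pi (c : ℝ) :
    ∫ θ in (-π)..π, exp (c * sin θ) = ∫ θ in (0 : ℝ)..2 * π, exp (c * sin θ) := by
  have hper : Function.Periodic (fun θ => exp (c * sin θ)) (2 * π) :=
    sin_periodic.comp fun y => exp (c * y)
  have h := hper.intervalIntegral_add_eq (-π) 0
  rwa [show -π + 2 * π = π by ring, zero_add] at h

theorem regIncGamma_nat_add_one (m : ℕ) (x : ℝ) :
    regIncGamma (m + 1) x = (∫ t in (0 : ℝ)..x, exp (-t) * t ^ m) / m.factorial := by
  rw [regIncGamma, Gamma_nat_eq_factorial, add_sub_cancel_right]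
  simp only [rpow_natCast]

theorem integral_radial_moment_eq_regIncGamma {σ : ℝ} (hσ : σ ≠ 0) (R : ℝ) (m : ℕ) :
    ∫ s in (0 : ℝ)..R, s / σ * exp (-(s ^ 2 / (2 * σ))) * (s ^ 2 / (2 * σ)) ^ m
      = m.factorial * regIncGamma (m + 1) (R ^ 2 / (2 * σ)) := by
  have hderiv : ∀ s ∈ uIcc 0 R, HasDerivAt (fun s : ℝ => s ^ 2 / (2 * σ)) (s / σ) s := by
    intro s _
    exact ((hasDerivAt_pow 2 s).div_const (2 * σ)).congr_deriv (by field_simp; norm_num)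
  have hsub := intervalIntegral.integral_comp_mul_deriv (g := fun t => exp (-t) * t ^ m)
    hderiv (continuous_id.div_const σ).continuousOn (by fun_prop)
  rw [zero_pow two_ne_zero, zero_div] at hsub
  rw [regIncGamma_nat_add_one, mul_div_cancel₀ _ (by positivity), ← hsub]
  congr 1 with s
  simp only [Function.comp]
  ring

theorem EuclideanSpace.norm_mk_two_sq (x y : ℝ) : ‖!₂[x, y]‖ ^ 2 = x ^ 2 + y ^ 2 := by
  simp [EuclideanSpace.norm_sq_eq, Fin.sum_univ_two]

theorem EuclideanSpace.norm_mk_two_polar (s θ : ℝ) : ‖!₂[s * cos θ, s * sin θ]‖ = |s| := by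
  rw [← sqrt_sq (norm_nonneg _), norm_mk_two_sq, mul_pow, mul_pow, ← mul_add, cos_sq_add_sin_sq,
    mul_one, sqrt_sq_eq_abs]

theorem EuclideanSpace.volume_preserving_mk_two :
    MeasurePreserving (fun p : ℝ × ℝ => !₂[p.1, p.2]) :=
  (PiLp.volume_preserving_toLp (Fin 2)).comp (volume_preserving_finTwoArrow ℝ).symm

theorem EuclideanSpace.measurableEmbedding_mk_two :
    MeasurableEmbedding (fun p : ℝ × ℝ => !₂[p.1, p.2]) :=
  (MeasurableEquiv.finTwoArrow.symm.trans
    (MeasurableEquiv.toLp 2 (Fin 2 → ℝ))).measurableEmbedding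

theorem setIntegral_closedBall_eq_integral_polar {E : Type*} [NormedAddCommGroup E]
    [NormedSpace ℝ E] {f : EuclideanSpace ℝ (Fin 2) → E} (hf : Continuous f) {R : ℝ}
    (hR : 0 ≤ R) :
    ∫ r in Metric.closedBall 0 R, f r =
      ∫ s in (0 : ℝ)..R, ∫ θ in (-π)..π, s • f !₂[s * cos θ, s * sin θ] := by
  set H : ℝ × ℝ → E := fun p => p.1 • f !₂[p.1 * cos p.2, p.1 * sin p.2]
  have hpolar : ∀ p ∈ polarCoord.target, p.1 • ((fun q : ℝ × ℝ => !₂[q.1, q.2]) ⁻¹'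
      Metric.closedBall 0 R).indicator (fun q => f !₂[q.1, q.2]) (polarCoord.symm p) =
      (Ioc 0 R ×ˢ Ioo (-π) π).indicator H p := by
    rintro ⟨s, θ⟩ ⟨hs : 0 < s, hθ⟩
    simp only [polarCoord_symm_apply, H, indicator, mem_preimage, Metric.mem_closedBall,
      dist_zero_right, EuclideanSpace.norm_mk_two_polar, abs_of_pos hs, mem_prod, mem_Ioc, hs,
      true_and, hθ, and_true]
    split_ifs <;> simp
  have hsub : Ioc 0 R ×ˢ Ioo (-π) π ⊆ polarCoord.target := fun p hp => ⟨hp.1.1, hp.2⟩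
  have hint : IntegrableOn H (Ioc 0 R ×ˢ Ioo (-π) π) (volume.prod volume) :=
    (ContinuousOn.integrableOn_compact (isCompact_Icc.prod isCompact_Icc)
      (by fun_prop : Continuous H).continuousOn).mono_set
      (prod_mono Ioc_subset_Icc_self Ioo_subset_Icc_self)
  rw [← EuclideanSpace.volume_preserving_mk_two.setIntegral_preimage_emb
      EuclideanSpace.measurableEmbedding_mk_two,
    ← integral_indicator (measurableSet_closedBall.preimage
      EuclideanSpace.measurableEmbedding_mk_two.measurable),
    ← integral_comp_polarCoord_symm,
    setIntegral_congr_fun polarCoord.open_target.measurableSet hpolar,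
    setIntegral_indicator (measurableSet_Ioc.prod measurableSet_Ioo),
    inter_eq_self_of_subset_right hsub, Measure.volume_eq_prod, setIntegral_prod H hint,
    intervalIntegral.integral_of_le hR]
  refine setIntegral_congr_fun measurableSet_Ioc fun s _ => ?_
  rw [intervalIntegral.integral_of_le (by linarith [pi_pos]), integral_Ioc_eq_integral_Ioo]

theorem integral_comp_norm_sub_eq_of_norm_eq {E F : Type*} [NormedAddCommGroup E]
    [InnerProductSpace ℝ E] [FiniteDimensional ℝ E] [MeasurableSpace E] [BorelSpace E]
    [NormedAddCommGroup F] [NormedSpace ℝ F] (Φ : ℝ → ℝ → F) {g g' : E} (h : ‖g‖ = ‖g'‖) :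
    ∫ r, Φ ‖r - g‖ ‖r‖ = ∫ r, Φ ‖r - g'‖ ‖r‖ := by
  set e := (ℝ ∙ (g' - g))ᗮ.reflection
  have heg : e g' = g := Submodule.reflection_sub h.symm
  rw [← e.measurePreserving.integral_comp e.toHomeomorph.measurableEmbedding]
  congr 1 with r
  rw [← heg, ← map_sub, e.norm_map, e.norm_map]

theorem gauss2_mk_two_polar_sub (σ s θ a : ℝ) :
    gauss2 σ (!₂[s * cos θ, s * sin θ] - !₂[0, a]) =
      (2 * π * σ)⁻¹ * exp (-(s ^ 2 + a ^ 2) / (2 * σ)) * exp (a * s / σ * sin θ) := by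
  have hsub : !₂[s * cos θ, s * sin θ] - !₂[0, a] = !₂[s * cos θ, s * sin θ - a] := by
    ext i; fin_cases i <;> simp
  rw [gauss2, hsub, EuclideanSpace.norm_mk_two_sq, mul_assoc _ (exp _), ← exp_add]
  congr 2
  linear_combination (-s ^ 2 / (2 * σ)) * sin_sq_add_cos_sq θ

theorem hasSum_integral_gauss2_polar {σ : ℝ} (hσ : σ ≠ 0) (a s : ℝ) :
    HasSum (fun m : ℕ => exp (-(a ^ 2 / (2 * σ))) * (a ^ 2 / (2 * σ)) ^ m /
        (m.factorial : ℝ) ^ 2 * (s / σ * exp (-(s ^ 2 / (2 * σ))) * (s ^ 2 / (2 * σ)) ^ m))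
      (∫ θ in (-π)..π, s • gauss2 σ (!₂[s * cos θ, s * sin θ] - !₂[0, a])) := by
  have hint : ∫ θ in (-π)..π, s • gauss2 σ (!₂[s * cos θ, s * sin θ] - !₂[0, a]) =
      s * (2 * π * σ)⁻¹ * exp (-(s ^ 2 + a ^ 2) / (2 * σ)) *
        ∫ θ in (0 : ℝ)..2 * π, exp (a * s / σ * sin θ) := by
    simp_rw [smul_eq_mul, gauss2_mk_two_polar_sub, ← mul_assoc]
    rw [intervalIntegral.integral_const_mul, integral_exp_mul_sin_neg_pi_pi]
  have hc : (a * s / σ) ^ 2 / 4 = a ^ 2 / (2 * σ) * (s ^ 2 / (2 * σ)) := by field_simp; ring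
  have he : exp (-(s ^ 2 + a ^ 2) / (2 * σ)) =
      exp (-(a ^ 2 / (2 * σ))) * exp (-(s ^ 2 / (2 * σ))) := by
    rw [← exp_add]; ring_nf
  have hterm : (fun m : ℕ => exp (-(a ^ 2 / (2 * σ))) * (a ^ 2 / (2 * σ)) ^ m /
      (m.factorial : ℝ) ^ 2 * (s / σ * exp (-(s ^ 2 / (2 * σ))) * (s ^ 2 / (2 * σ)) ^ m)) =
      fun m : ℕ => s * (2 * π * σ)⁻¹ * exp (-(s ^ 2 + a ^ 2) / (2 * σ)) *
        (2 * π * ((a * s / σ) ^ 2 / 4) ^ m / (m.factorial : ℝ) ^ 2) := by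
    ext m
    rw [hc, he, mul_pow]
    field_simp
  rw [hint, hterm]
  exact (hasSum_integral_exp_mul_sin (a * s / σ)).mul_left _

theorem integral_mul_disc2 (f : EuclideanSpace ℝ (Fin 2) → ℝ) (R : ℝ) :
    ∫ r, f r * disc2 R r = ∫ r in Metric.closedBall 0 R, f r := by
  rw [← integral_indicator Metric.isClosed_closedBall.measurableSet]
  congr 1 with r
  simp only [disc2, indicator, Metric.mem_closedBall, dist_zero_right, mul_ite, mul_one, mul_zero]

theorem norm_radial_series_term_le {σ R s x : ℝ} (hσ : 0 < σ) (hs : s ∈ Icc 0 R) (hx : 0 ≤ x)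
    (m : ℕ) :
    ‖exp (-x) * x ^ m / (m.factorial : ℝ) ^ 2 *
        (s / σ * exp (-(s ^ 2 / (2 * σ))) * (s ^ 2 / (2 * σ)) ^ m)‖ ≤
      R / σ * ((x * (R ^ 2 / (2 * σ))) ^ m / m.factorial) := by
  obtain ⟨hs0, hsR⟩ := hs
  have hR : 0 ≤ R := hs0.trans hsR
  have hfact : (m.factorial : ℝ) ≤ (m.factorial : ℝ) ^ 2 :=
    le_self_pow₀ (by exact_mod_cast m.factorial_pos) two_ne_zero
  calc _ = exp (-x) * x ^ m / (m.factorial : ℝ) ^ 2 *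
        (s / σ * exp (-(s ^ 2 / (2 * σ))) * (s ^ 2 / (2 * σ)) ^ m) :=
        Real.norm_of_nonneg (by positivity)
    _ ≤ 1 * x ^ m / m.factorial * (R / σ * 1 * (R ^ 2 / (2 * σ)) ^ m) := by
        gcongr <;> exact exp_le_one_iff.mpr (neg_nonpos.mpr (by positivity))
    _ = R / σ * ((x * (R ^ 2 / (2 * σ))) ^ m / m.factorial) := by ring

theorem integral_gauss2_sub_mul_disc2 {σ R : ℝ} (hσ : 0 < σ) (hR : 0 ≤ R) (a : ℝ) :
    ∫ r, gauss2 σ (r - !₂[0, a]) * disc2 R r =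
      exp (-a ^ 2 / (2 * σ)) * ∑' m : ℕ, (a ^ 2 / (2 * σ)) ^ m * (1 / m.factorial) *
        regIncGamma (m + 1) (R ^ 2 / (2 * σ)) := by
  have hsum := intervalIntegral.hasSum_integral_of_summable_bound (fun m => by fun_prop)
    ((summable_pow_div_factorial (a ^ 2 / (2 * σ) * (R ^ 2 / (2 * σ)))).mul_left (R / σ))
    (fun m s hs => norm_radial_series_term_le hσ (by rwa [uIcc_of_le hR] at hs) (by positivity) m)
    (fun s _ => hasSum_integral_gauss2_polar hσ.ne' a s)
  rw [integral_mul_disc2, setIntegral_closedBall_eq_integral_polar (by unfold gauss2; fun_prop) hR,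
    neg_div, ← hsum.tsum_eq, ← tsum_mul_left]
  congr 1 with m
  rw [intervalIntegral.integral_const_mul, integral_radial_moment_eq_regIncGamma hσ.ne']
  field_simp

/-- The convolution of the disc indicator with the centered Gaussian is radially
symmetric and is given by the incomplete-gamma series. -/
theorem disc_conv_gaussian (σ R : ℝ) (hσ : 0 < σ) (hR : 0 < R) :
    (∀ g g' : EuclideanSpace ℝ (Fin 2), ‖g‖ = ‖g'‖ →
        (∫ r, gauss2 σ (r - g) * disc2 R r) = ∫ r, gauss2 σ (r - g') * disc2 R r) ∧
    (∀ g : EuclideanSpace ℝ (Fin 2),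
        (∫ r, gauss2 σ (r - g) * disc2 R r) =
          Real.exp (-‖g‖ ^ 2 / (2 * σ)) *
            ∑' m : ℕ, (‖g‖ ^ 2 / (2 * σ)) ^ m * (1 / m.factorial) *
              regIncGamma (m + 1) (R ^ 2 / (2 * σ))) := by
  have hradial (g g' : EuclideanSpace ℝ (Fin 2)) (h : ‖g‖ = ‖g'‖) :
      ∫ r, gauss2 σ (r - g) * disc2 R r = ∫ r, gauss2 σ (r - g') * disc2 R r :=
    integral_comp_norm_sub_eq_of_norm_eq
      (fun u v => (2 * π * σ)⁻¹ * exp (-u ^ 2 / (2 * σ)) * if v ≤ R then 1 else 0) h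
  refine ⟨hradial, fun g => ?_⟩
  have hg : ‖g‖ = ‖!₂[0, ‖g‖]‖ := by
    rw [← sqrt_sq (norm_nonneg !₂[0, ‖g‖]), EuclideanSpace.norm_mk_two_sq, zero_pow two_ne_zero,
      zero_add, sqrt_sq (norm_nonneg g)]
  rw [hradial g _ hg, integral_gauss2_sub_mul_disc2 hσ hR.le]
end

section
/- Let γ_d, β : ℝ^n → ℝ be smooth positive functions on a compact set K, with γ_d(q) = ‖q − q_d‖² and β = ∏_{i=0}^{N} β_i with each β_i ≥ ε > 0 on K. If a point q ∈ K satisfies k β(q) ∇γ_d(q) = γ_d(q) ∇β(q) and q ≠ q_d, then k ≤ (1/(2ε)) · max_K √γ_d · ∑_{i=0}^{N} max_K ‖∇β_i‖. Equivalently, if k exceeds this bound, the function γ_d^k/β has no critical points in K ∖ {q_d}. -/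
open InnerProductSpace

/-- Upper bound on `k` at a critical point of `γ_d^k/β` in a region where every
`β_i ≥ ε`: if `k β(q) ∇γ_d(q) = γ_d(q) ∇β(q)` at `q ≠ q_d`, then
`k ≤ (1/(2ε)) · max_K √γ_d · ∑_i max_K ‖∇β_i‖`. -/
theorem critical_point_k_bound {n N : ℕ} (K : Set (EuclideanSpace ℝ (Fin n)))
    (hK : IsCompact K) (qd : EuclideanSpace ℝ (Fin n))
    (βi : Fin (N + 1) → EuclideanSpace ℝ (Fin n) → ℝ)
    (hβi : ∀ i, ContDiff ℝ (⊤ : ℕ∞) (βi i)) (ε : ℝ) (hε : 0 < ε)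
    (hβε : ∀ i, ∀ q ∈ K, ε ≤ βi i q)
    (γd : EuclideanSpace ℝ (Fin n) → ℝ)
    (hγd : γd = fun q => ‖q - qd‖ ^ 2)
    (β : EuclideanSpace ℝ (Fin n) → ℝ)
    (hβ : β = fun q => ∏ i, βi i q)
    (k : ℕ) (q : EuclideanSpace ℝ (Fin n)) (hqK : q ∈ K) (hq : q ≠ qd)
    (hcrit : ((k : ℝ) * β q) • gradient γd q = γd q • gradient β q) :
    (k : ℝ) ≤ 1 / (2 * ε) * sSup ((fun p => Real.sqrt (γd p)) '' K) *
      ∑ i, sSup ((fun p => ‖gradient (βi i) p‖) '' K) := by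
  classical
  set s : ℝ := ‖q - qd‖ with hsdef
  have hs : 0 < s := by
    simpa [hsdef, sub_eq_zero] using hq
  -- positivity of β i at q, and of β q
  have hβiq : ∀ i, 0 < βi i q := fun i => lt_of_lt_of_le hε (hβε i q hqK)
  have hβq : 0 < β q := by
    rw [hβ]; exact Finset.prod_pos fun i _ => hβiq i
  have hγdq : γd q = s ^ 2 := by rw [hγd]
  -- gradient of γd
  have hgradγ : HasGradientAt γd ((2 : ℝ) • (q - qd)) q := by
    rw [hγd, hasGradientAt_iff_hasFDerivAt]
    have h1 : HasFDerivAt (fun x : EuclideanSpace ℝ (Fin n) => x - qd) (ContinuousLinearMap.id ℝ (EuclideanSpace ℝ (Fin n))) q :=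
      (hasFDerivAt_id q).sub_const qd
    have h2 := h1.norm_sq
    convert h2 using 1
    ext y
    simp [real_inner_smul_left, two_smul, mul_comm]
    ext y
    simp [real_inner_smul_left, two_smul, mul_comm]
  -- gradient of β via product rule
  have hβd : ∀ i, HasFDerivAt (βi i) (fderiv ℝ (βi i) q) q :=
    fun i => (((hβi i).differentiable (by simp)) q).hasFDerivAt
  have hgradβ : HasGradientAt β
      (∑ i, (∏ j ∈ Finset.univ.erase i, βi j q) • gradient (βi i) q) q := by
    rw [hβ, hasGradientAt_iff_hasFDerivAt]
    have h3 := HasFDerivAt.finset_prod (u := Finset.univ) (g := βi)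
      (g' := fun i => fderiv ℝ (βi i) q) (x := q) (fun i _ => hβd i)
    convert h3 using 1
    · ext y
      rfl
    rw [map_sum]
    refine Finset.sum_congr rfl fun i _ => ?_
    rw [map_smul]
    congr 1
    exact (toDual ℝ (EuclideanSpace ℝ (Fin n))).apply_symm_apply _
  have hγval : gradient γd q = (2 : ℝ) • (q - qd) := hgradγ.gradient
  have hβval : gradient β q
      = ∑ i, (∏ j ∈ Finset.univ.erase i, βi j q) • gradient (βi i) q := hgradβ.gradient
  -- norms
  have hnormγ : ‖gradient γd q‖ = 2 * s := by
    rw [hγval, norm_smul]; simp [hsdef]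
  -- erase products bounded by β q / ε
  have hc : ∀ i : Fin (N + 1), (∏ j ∈ Finset.univ.erase i, βi j q) ≤ β q / ε := by
    intro i
    have hcpos : 0 < ∏ j ∈ Finset.univ.erase i, βi j q :=
      Finset.prod_pos fun j _ => hβiq j
    rw [le_div_iff₀ hε]
    calc (∏ j ∈ Finset.univ.erase i, βi j q) * ε
        ≤ (∏ j ∈ Finset.univ.erase i, βi j q) * βi i q := by
          exact mul_le_mul_of_nonneg_left (hβε i q hqK) hcpos.le
      _ = β q := by
          rw [hβ, mul_comm]
          exact Finset.mul_prod_erase Finset.univ (fun j => βi j q) (Finset.mem_univ i)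
  have hcnn : ∀ i : Fin (N + 1), 0 ≤ ∏ j ∈ Finset.univ.erase i, βi j q :=
    fun i => (Finset.prod_pos fun j _ => hβiq j).le
  -- bound on ‖gradient β q‖
  have hnormβ : ‖gradient β q‖ ≤ (β q / ε) * ∑ i, ‖gradient (βi i) q‖ := by
    rw [hβval]
    calc ‖∑ i, (∏ j ∈ Finset.univ.erase i, βi j q) • gradient (βi i) q‖
        ≤ ∑ i, ‖(∏ j ∈ Finset.univ.erase i, βi j q) • gradient (βi i) q‖ :=
          norm_sum_le _ _
      _ ≤ ∑ i, (β q / ε) * ‖gradient (βi i) q‖ := by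
          refine Finset.sum_le_sum fun i _ => ?_
          rw [norm_smul, Real.norm_eq_abs, abs_of_nonneg (hcnn i)]
          exact mul_le_mul_of_nonneg_right (hc i) (norm_nonneg _)
      _ = (β q / ε) * ∑ i, ‖gradient (βi i) q‖ := by rw [Finset.mul_sum]
  -- the scalar equation from hcrit
  have heq : (k : ℝ) * β q * (2 * s) = s ^ 2 * ‖gradient β q‖ := by
    have := congrArg norm hcrit
    rw [norm_smul, norm_smul, hnormγ, Real.norm_eq_abs, Real.norm_eq_abs,
      abs_of_nonneg (by positivity : (0:ℝ) ≤ (k:ℝ) * β q),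
      abs_of_nonneg (by rw [hγdq]; positivity : (0:ℝ) ≤ γd q), hγdq] at this
    exact this
  -- deduce k ≤ s/(2ε) * ∑ ‖grad βi q‖
  have hkey : (k : ℝ) ≤ 1 / (2 * ε) * (s * ∑ i, ‖gradient (βi i) q‖) := by
    have h4 : (k : ℝ) * β q * (2 * s) ≤ s ^ 2 * ((β q / ε) * ∑ i, ‖gradient (βi i) q‖) := by
      rw [heq]
      exact mul_le_mul_of_nonneg_left hnormβ (by positivity)
    have h5 : s ^ 2 * ((β q / ε) * ∑ i, ‖gradient (βi i) q‖)
        = (1 / (2 * ε) * (s * ∑ i, ‖gradient (βi i) q‖)) * β q * (2 * s) := by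
      field_simp
    rw [h5] at h4
    exact le_of_mul_le_mul_right (le_of_mul_le_mul_right h4 (by positivity)) hβq
  -- compare with suprema over K
  have hKne : K.Nonempty := ⟨q, hqK⟩
  have hγcont : Continuous fun p : EuclideanSpace ℝ (Fin n) => Real.sqrt (γd p) := by
    rw [hγd]
    exact Real.continuous_sqrt.comp ((continuous_id.sub continuous_const).norm.pow 2)
  have hgicont : ∀ i, Continuous fun p : EuclideanSpace ℝ (Fin n) => ‖gradient (βi i) p‖ := by
    intro i
    have : (fun p : EuclideanSpace ℝ (Fin n) => ‖gradient (βi i) p‖) = fun p => ‖fderiv ℝ (βi i) p‖ := by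
      funext p
      exact (toDual ℝ (EuclideanSpace ℝ (Fin n))).symm.norm_map _
    rw [this]
    exact ((hβi i).continuous_fderiv (by simp)).norm
  have hsle : s ≤ sSup ((fun p => Real.sqrt (γd p)) '' K) := by
    have hmem : s ∈ (fun p => Real.sqrt (γd p)) '' K := by
      refine ⟨q, hqK, ?_⟩
      show Real.sqrt (γd q) = s
      rw [hγdq, Real.sqrt_sq hs.le]
    exact le_csSup (hK.bddAbove_image hγcont.continuousOn) hmem
  have hgile : ∀ i, ‖gradient (βi i) q‖ ≤ sSup ((fun p => ‖gradient (βi i) p‖) '' K) :=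
    fun i => le_csSup (hK.bddAbove_image (hgicont i).continuousOn) ⟨q, hqK, rfl⟩
  have hSnn : (0:ℝ) ≤ sSup ((fun p => Real.sqrt (γd p)) '' K) := le_trans hs.le hsle
  calc (k : ℝ) ≤ 1 / (2 * ε) * (s * ∑ i, ‖gradient (βi i) q‖) := hkey
    _ ≤ 1 / (2 * ε) * (sSup ((fun p => Real.sqrt (γd p)) '' K) *
        ∑ i, sSup ((fun p => ‖gradient (βi i) p‖) '' K)) := by
        refine mul_le_mul_of_nonneg_left ?_ (by positivity)
        refine mul_le_mul hsle (Finset.sum_le_sum fun i _ => hgile i)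
          (Finset.sum_nonneg fun i _ => norm_nonneg _) hSnn
    _ = 1 / (2 * ε) * sSup ((fun p => Real.sqrt (γd p)) '' K) *
        ∑ i, sSup ((fun p => ‖gradient (βi i) p‖) '' K) := by ring
end
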